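/- With g : ℤⁿ → ℤⁿ as above, for every dominant integral weight λ ∈ ℤⁿ (λ_1 ≥ … ≥ λ_n), the (n−1)-fold iterate satisfies g^{n−1}(λ) = (λ_1, …, λ_1, λ_1 − 1, …, λ_1 − 1), where the entry λ_1 appears exactly j(λ) = #{ℓ : λ_ℓ ≡ λ_1 (mod 2)} times. -/

import Mathlib

/-! Indexing from `0`, `g` fixes `ω₀`, shifts the remaining entries one place to the right, and
lowers by one the entry landing at position `i + 1` exactly when `ωᵢ ≡ ω₀ (mod 2)` while
`ω_{i+1}, …, ω_{n-1}` all have the other parity. Hence `g` preserves `ω₀` and `j`. If `ω` agrees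
on positions `≤ k` with the staircase of `j` entries `ω₀` followed by entries `ω₀ - 1`, then the
first `j` entries are the only ones of the parity of `ω₀`, so the lowering happens at position
`j` if at all, and `g ω` agrees with the staircase on positions `≤ k + 1`. -/

/-- First step of the operation: `ω′₁ = ω₁`; for `i ≥ 2`, `ω′ᵢ = ω_{i−1}` if
`ω_{i−1} − ωᵢ` is even and `ω′ᵢ = ω_{i−1} − 1` otherwise (0-indexed here). -/
def gAux (ω : ℕ → ℤ) : ℕ → ℤ := fun i =>
  if i = 0 then ω 0
  else if (ω (i - 1) - ω i) % 2 = 0 then ω (i - 1) else ω (i - 1) - 1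

/-- `X = {i : 2 ≤ i ≤ n, ω_{i−1} ≠ ω′ᵢ}` (0-indexed: `1 ≤ i < n`). -/
def gSet (n : ℕ) (ω : ℕ → ℤ) : Finset ℕ :=
  (Finset.Ico 1 n).filter fun i => ω (i - 1) ≠ gAux ω i

/-- `X′ = X` if `#X` is even, and `X` minus its maximal element otherwise. -/
def gSet' (n : ℕ) (ω : ℕ → ℤ) : Finset ℕ :=
  if Even (gSet n ω).card then gSet n ω
  else (gSet n ω).erase ((gSet n ω).max.unbotD 0)

/-- The map `g : ℤⁿ → ℤⁿ`: `g(ω)ᵢ = ω′ᵢ + 1` if `i ∈ X′` and `g(ω)ᵢ = ω′ᵢ` otherwise. -/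
def gMap (n : ℕ) (ω : ℕ → ℤ) : ℕ → ℤ := fun i =>
  if i ∈ gSet' n ω then gAux ω i + 1 else gAux ω i

/-- `j(ω) = #{ℓ < n : ω_ℓ ≡ ω₁ (mod 2)}`. -/
def jCount (n : ℕ) (ω : ℕ → ℤ) : ℕ :=
  ((Finset.range n).filter fun ℓ => ω ℓ % 2 = ω 0 % 2).card

lemma Finset.max_unbotD_eq_iff {α : Type*} [LinearOrder α] {s : Finset α} (hs : s.Nonempty)
    {a d : α} : s.max.unbotD d = a ↔ a ∈ s ∧ ∀ b ∈ s, b ≤ a := by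
  rw [← Finset.coe_max' hs, WithBot.unbotD_coe, Finset.max'_eq_iff]

def OppositeParityFrom (n : ℕ) (ω : ℕ → ℤ) (i : ℕ) : Prop :=
  ∀ ℓ ∈ Finset.Ico i n, ω ℓ % 2 ≠ ω 0 % 2

instance (n : ℕ) (ω : ℕ → ℤ) : DecidablePred (OppositeParityFrom n ω) := fun _ => by
  unfold OppositeParityFrom; infer_instance

section

variable {n : ℕ} {ω : ℕ → ℤ}

lemma oppositeParityFrom_iff_of_lt {i : ℕ} (hi : i < n) :
    OppositeParityFrom n ω i ↔ ω i % 2 ≠ ω 0 % 2 ∧ OppositeParityFrom n ω (i + 1) := by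
  simp only [OppositeParityFrom, Finset.mem_Ico]
  constructor
  · intro h
    exact ⟨h i ⟨le_rfl, hi⟩, fun ℓ hℓ => h ℓ ⟨by omega, hℓ.2⟩⟩
  · rintro ⟨hi', h⟩ ℓ hℓ
    rcases hℓ.1.eq_or_lt with rfl | hlt
    exacts [hi', h ℓ ⟨hlt, hℓ.2⟩]

lemma mem_gSet {i : ℕ} : i ∈ gSet n ω ↔ 1 ≤ i ∧ i < n ∧ ω (i - 1) % 2 ≠ ω i % 2 := by
  rcases i with _ | i
  · simp [gSet]
  · simp [gSet, gAux]
    omega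

lemma succ_mem_gSet {i : ℕ} : i + 1 ∈ gSet n ω ↔ i + 1 < n ∧ ω i % 2 ≠ ω (i + 1) % 2 := by
  simp [mem_gSet]

lemma even_card_gSet_iff (m : ℕ) : Even (gSet (m + 1) ω).card ↔ ω m % 2 = ω 0 % 2 := by
  induction m with
  | zero => simp [gSet]
  | succ m ih =>
    have hsucc : gSet (m + 2) ω =
        if ω m % 2 = ω (m + 1) % 2 then gSet (m + 1) ω else insert (m + 1) (gSet (m + 1) ω) := by
      ext i
      split_ifs <;> simp only [Finset.mem_insert, mem_gSet] <;> grind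
    have hnot : m + 1 ∉ gSet (m + 1) ω := by simp [mem_gSet]
    rw [hsucc]
    split_ifs with h
    · rw [ih]; omega
    · rw [Finset.card_insert_of_notMem hnot, Nat.even_add_one, ih]; omega

lemma emod_two_eq_of_forall_notMem_gSet {a b : ℕ} (hab : a ≤ b) (hb : b < n)
    (h : ∀ ℓ, a < ℓ → ℓ ≤ b → ℓ ∉ gSet n ω) : ω b % 2 = ω a % 2 := by
  induction b, hab using Nat.le_induction with
  | base => rfl
  | succ b hab ih =>
    have := h (b + 1) (by omega) le_rfl
    rw [succ_mem_gSet] at this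
    rw [← ih (by omega) fun ℓ h₁ h₂ => h ℓ h₁ (by omega)]
    omega

lemma odd_card_gSet_and_max_eq_iff {i : ℕ} (hi : i + 1 < n) :
    (¬Even (gSet n ω).card ∧ (gSet n ω).max.unbotD 0 = i + 1) ↔
      ω i % 2 = ω 0 % 2 ∧ OppositeParityFrom n ω (i + 1) := by
  obtain ⟨m, rfl⟩ : ∃ m, n = m + 1 := ⟨n - 1, by omega⟩
  constructor
  · rintro ⟨hodd, hmax⟩
    have hne : (gSet (m + 1) ω).Nonempty :=
      Finset.nonempty_iff_ne_empty.2 fun h => hodd (by simp [h])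
    rw [even_card_gSet_iff] at hodd
    obtain ⟨hmem, hle⟩ := (Finset.max_unbotD_eq_iff hne).1 hmax
    have htail : ∀ ℓ ∈ Finset.Ico (i + 1) (m + 1), ω m % 2 = ω ℓ % 2 := fun ℓ hℓ => by
      rw [Finset.mem_Ico] at hℓ
      refine emod_two_eq_of_forall_notMem_gSet (by omega) (lt_add_one m) fun b hb _ hbX => ?_
      have := hle b hbX
      omega
    have := htail (i + 1) (by simp; omega)
    rw [succ_mem_gSet] at hmem
    exact ⟨by omega, fun ℓ hℓ => by have := htail ℓ hℓ; omega⟩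
  · rintro ⟨hpar, htail⟩
    have hlast := htail m (by simp; omega)
    have hmem : i + 1 ∈ gSet (m + 1) ω := by
      have := htail (i + 1) (by simp; omega)
      rw [succ_mem_gSet]
      omega
    refine ⟨(even_card_gSet_iff m).not.2 hlast,
      (Finset.max_unbotD_eq_iff ⟨_, hmem⟩).2 ⟨hmem, fun b hb => ?_⟩⟩
    rw [mem_gSet] at hb
    by_contra! hlt
    have h₁ := htail (b - 1) (by simp; omega)
    have h₂ := htail b (by simp; omega)
    omega

lemma gMap_zero : gMap n ω 0 = ω 0 := by
  have : 0 ∉ gSet' n ω := by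
    unfold gSet'
    split_ifs <;> simp [mem_gSet]
  simp [gMap, gAux, this]

lemma gMap_succ_eq_ite {i : ℕ} (hi : i + 1 < n) :
    gMap n ω (i + 1) = if ¬Even (gSet n ω).card ∧ (gSet n ω).max.unbotD 0 = i + 1
      then ω i - 1 else ω i := by
  by_cases hX : i + 1 ∈ gSet n ω
  · have hpar : (ω i - ω (i + 1)) % 2 ≠ 0 := by rw [succ_mem_gSet] at hX; omega
    unfold gMap gSet'
    split_ifs <;> simp_all [gAux]
  · have hpar : (ω i - ω (i + 1)) % 2 = 0 := by rw [succ_mem_gSet] at hX; omega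
    have hmax : (gSet n ω).Nonempty → (gSet n ω).max.unbotD 0 ∈ gSet n ω := fun hne =>
      ((Finset.max_unbotD_eq_iff hne).1 rfl).1
    unfold gMap gSet'
    split_ifs <;> simp_all [gAux]

lemma gMap_succ {i : ℕ} (hi : i + 1 < n) :
    gMap n ω (i + 1) =
      if ω i % 2 = ω 0 % 2 ∧ OppositeParityFrom n ω (i + 1) then ω i - 1 else ω i := by
  rw [gMap_succ_eq_ite hi]
  exact if_congr (odd_card_gSet_and_max_eq_iff hi) rfl rfl

lemma jCount_pos (hn : 0 < n) : 0 < jCount n ω :=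
  Finset.card_pos.2 ⟨0, by simp [hn]⟩

lemma jCount_le_of_oppositeParityFrom {m : ℕ} (h : OppositeParityFrom n ω m) :
    jCount n ω ≤ m := by
  refine (Finset.card_le_card fun ℓ hℓ => ?_).trans (Finset.card_range m).le
  rw [Finset.mem_filter, Finset.mem_range] at hℓ
  rw [Finset.mem_range]
  by_contra! hmℓ
  exact h ℓ (Finset.mem_Ico.2 ⟨hmℓ, hℓ.1⟩) hℓ.2

lemma oppositeParityFrom_jCount (h : ∀ ℓ < jCount n ω, ω ℓ % 2 = ω 0 % 2) :
    OppositeParityFrom n ω (jCount n ω) := by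
  intro ℓ hℓ hpar
  rw [Finset.mem_Ico] at hℓ
  have hsub : insert ℓ (Finset.range (jCount n ω)) ⊆
      (Finset.range n).filter fun ℓ => ω ℓ % 2 = ω 0 % 2 := by
    intro x hx
    simp only [Finset.mem_insert, Finset.mem_range] at hx
    rcases hx with rfl | hx
    · simp [hℓ.2, hpar]
    · simp [h x hx, hx.trans_le hℓ.1 |>.trans hℓ.2]
  have := Finset.card_le_card hsub
  rw [Finset.card_insert_of_notMem (by simp [hℓ.1]), Finset.card_range] at this
  exact (Nat.lt_succ_self _).not_ge this

lemma jCount_gMap : jCount n (gMap n ω) = jCount n ω := by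
  obtain _ | m := n
  · simp [jCount]
  -- The entry shifted into position `ℓ + 1` is lowered exactly where `OppositeParityFrom`
  -- switches on, so the parity changes telescope to `[ω m ≢ ω 0]`, the shifted-out entry.
  have hterm : ∀ ℓ ∈ Finset.range m,
      (if gMap (m + 1) ω (ℓ + 1) % 2 = ω 0 % 2 then (1 : ℤ) else 0) =
        (if ω ℓ % 2 = ω 0 % 2 then 1 else 0) -
          ((if OppositeParityFrom (m + 1) ω (ℓ + 1) then 1 else 0) -
            if OppositeParityFrom (m + 1) ω ℓ then 1 else 0) := by
    intro ℓ hℓ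
    rw [Finset.mem_range] at hℓ
    simp only [gMap_succ (show ℓ + 1 < m + 1 by omega),
      oppositeParityFrom_iff_of_lt (show ℓ < m + 1 by omega)]
    by_cases h : OppositeParityFrom (m + 1) ω (ℓ + 1) <;>
      by_cases hp : ω ℓ % 2 = ω 0 % 2 <;> simp [h, hp]
    omega
  have hfirst : ¬OppositeParityFrom (m + 1) ω 0 := fun h => h 0 (by simp) rfl
  have hlast : OppositeParityFrom (m + 1) ω m ↔ ω m % 2 ≠ ω 0 % 2 := by
    simp [OppositeParityFrom]
  zify
  simp only [jCount, Finset.natCast_card_filter, gMap_zero]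
  rw [Finset.sum_range_succ', Finset.sum_range_succ, Finset.sum_congr rfl hterm,
    Finset.sum_sub_distrib,
    Finset.sum_range_sub fun ℓ => if OppositeParityFrom (m + 1) ω ℓ then (1 : ℤ) else 0]
  simp only [hfirst, if_false, gMap_zero]
  split_ifs <;> simp_all

lemma gMap_eq_ite_of_forall_le {k : ℕ}
    (hω : ∀ i ≤ k, i < n → ω i = if i < jCount n ω then ω 0 else ω 0 - 1) :
    ∀ i ≤ k + 1, i < n → gMap n ω i = if i < jCount n ω then ω 0 else ω 0 - 1 := by
  rintro (_ | i) hik hin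
  · simp [gMap_zero, jCount_pos hin]
  have hdrop : OppositeParityFrom n ω (i + 1) → jCount n ω ≤ i + 1 :=
    jCount_le_of_oppositeParityFrom
  have hjump : i + 1 = jCount n ω → OppositeParityFrom n ω (i + 1) := fun hj => by
    rw [hj]
    refine oppositeParityFrom_jCount fun ℓ hℓ => ?_
    rw [hω ℓ (by omega) (by omega), if_pos hℓ]
  rw [gMap_succ hin, hω i (by omega) (by omega)]
  by_cases h : OppositeParityFrom n ω (i + 1)
  · have := hdrop h
    simp only [h, and_true]
    split_ifs <;> omega
  · have := mt hjump h
    simp only [h, and_false, if_false]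
    split_ifs <;> omega

end

theorem gMap_iterate_general (n : ℕ) (lam : ℕ → ℤ) :
    ∀ i < n, (gMap n)^[n - 1] lam i =
      if i < jCount n lam then lam 0 else lam 0 - 1 := by
  have hzero (k : ℕ) : (gMap n)^[k] lam 0 = lam 0 :=
    congrFun (Function.iterate_invariant (f := gMap n) (g := fun ω => ω 0)
      (funext fun _ => gMap_zero) k) lam
  have hj (k : ℕ) : jCount n ((gMap n)^[k] lam) = jCount n lam :=
    congrFun (Function.iterate_invariant (f := gMap n) (g := jCount n)
      (funext fun _ => jCount_gMap) k) lam
  have hstep (k : ℕ) : ∀ i ≤ k, i < n →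
      (gMap n)^[k] lam i = if i < jCount n lam then lam 0 else lam 0 - 1 := by
    induction k with
    | zero =>
      rintro i hi hin
      obtain rfl : i = 0 := by omega
      simp [jCount_pos hin]
    | succ k ih =>
      rw [Function.iterate_succ_apply']
      rw [← hzero k, ← hj k] at ih ⊢
      exact gMap_eq_ite_of_forall_le ih
  exact fun i hi => hstep (n - 1) i (by omega) hi

/-- For every dominant integral weight `λ ∈ ℤⁿ`, the `(n−1)`-fold iterate of `g`
satisfies `g^{n−1}(λ) = (λ₁, …, λ₁, λ₁−1, …, λ₁−1)`, with `λ₁` appearing exactly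
`j(λ)` times. -/
theorem gMap_iterate (n : ℕ) (lam : ℕ → ℤ)
    (hdom : ∀ i : ℕ, i + 1 < n → lam (i + 1) ≤ lam i) :
    ∀ i < n, (gMap n)^[n - 1] lam i =
      if i < jCount n lam then lam 0 else lam 0 - 1 :=
  gMap_iterate_general n lam
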